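/- arXiv:2407.13482 — 2 statements merged into one kernel-verified Lean document; each statement's English description precedes it below -/
import Mathlib

section
/- Let p ≥ 1 and let 0 = k₀ < k₁ < ⋯ < k_p < k_{p+1} = n be integers, and set n_j = k_j − k_{j−1} for j = 1, …, p+1. Let a₁, …, a_{p+1} be pairwise distinct real numbers. Then the set of real symmetric n×n matrices X satisfying ∏_{j=1}^{p+1}(X − a_j I) = 0 and tr(Xⁱ) = Σ_{j=1}^{p+1} n_j a_jⁱ for every i = 1, …, p is equal to the set { Q Λ_a Qᵀ : Q ∈ SO_n(ℝ) }, where Λ_a = diag(a₁·I_{n₁}, …, a_{p+1}·I_{n_{p+1}}). -/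
open Matrix

/-- For `0 ≤ i < n`, the index `j ∈ {0, …, p}` of the block (determined by the boundaries
`k 0 < k 1 < ⋯ < k (p+1)`) containing `i`, i.e. the `j` with `k j ≤ i < k (j+1)`. -/
def blkIdx (k : ℕ → ℕ) (p i : ℕ) : ℕ :=
  ((Finset.range (p + 1)).filter fun j => k (j + 1) ≤ i).card

section Aux

variable {N : ℕ}

lemma conj_list_prod (U V : Matrix (Fin N) (Fin N) ℝ) (hVU : V * U = 1)
    (l : List ℕ) (f : ℕ → Matrix (Fin N) (Fin N) ℝ) :
    (l.map (fun j => U * f j * V)).prod = U * (l.map f).prod * V := by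
  have hUV : U * V = 1 := mul_eq_one_comm.mpr hVU
  induction l with
  | nil => simp [hUV]
  | cons x xs ih =>
      simp only [List.map_cons, List.prod_cons, ih]
      calc (U * f x * V) * (U * (xs.map f).prod * V)
          = U * f x * (V * U) * (xs.map f).prod * V := by noncomm_ring
        _ = U * (f x * (xs.map f).prod) * V := by rw [hVU]; noncomm_ring

lemma diagonal_list_prod (l : List ℕ) (d : ℕ → Fin N → ℝ) :
    (l.map (fun j => diagonal (d j))).prod = diagonal (fun i => (l.map (fun j => d j i)).prod) := by
  induction l with
  | nil => simp [Matrix.diagonal_one]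
  | cons x xs ih =>
      simp only [List.map_cons, List.prod_cons, ih, Matrix.diagonal_mul_diagonal]

lemma myConjPow (Q M : Matrix (Fin N) (Fin N) ℝ) (hQ : Qᵀ * Q = 1) (i : ℕ) :
    (Q * M * Qᵀ) ^ i = Q * M ^ i * Qᵀ := by
  have hQQ : Q * Qᵀ = 1 := mul_eq_one_comm.mpr hQ
  induction i with
  | zero => simp [hQQ]
  | succ m ih =>
      rw [pow_succ, pow_succ, ih]
      calc Q * M ^ m * Qᵀ * (Q * M * Qᵀ) = Q * M ^ m * (Qᵀ * Q) * M * Qᵀ := by noncomm_ring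
        _ = Q * (M ^ m * M) * Qᵀ := by rw [hQ]; noncomm_ring

end Aux

section Blk

variable {p n : ℕ} {k : ℕ → ℕ}

lemma kmono (hmono : ∀ j, j ≤ p → k j < k (j + 1)) :
    ∀ s t, s ≤ t → t ≤ p + 1 → k s ≤ k t := by
  intro s t hst htp
  induction t with
  | zero => interval_cases s; rfl
  | succ m ih =>
      rcases Nat.lt_or_ge s (m+1) with h | h
      · exact le_trans (ih (Nat.lt_succ_iff.mp h) (by omega)) (le_of_lt (hmono m (by omega)))
      · have : s = m + 1 := by omega
        subst this; rfl

lemma blkIdx_le (hmono : ∀ j, j ≤ p → k j < k (j + 1)) (hkn : k (p + 1) = n)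
    {i : ℕ} (hi : i < n) : blkIdx k p i ≤ p := by
  have hsub : ((Finset.range (p + 1)).filter fun j => k (j + 1) ≤ i) ⊆
      (Finset.range (p+1)).erase p := by
    intro j hj
    simp only [Finset.mem_filter, Finset.mem_range] at hj
    refine Finset.mem_erase.mpr ⟨?_, Finset.mem_range.mpr hj.1⟩
    rintro rfl
    omega
  have := Finset.card_le_card hsub
  rw [Finset.card_erase_of_mem (Finset.mem_range.mpr (by omega)), Finset.card_range] at this
  simpa [blkIdx] using this

lemma blkIdx_spec (hmono : ∀ j, j ≤ p → k j < k (j + 1)) (hk0 : k 0 = 0) (hkn : k (p + 1) = n)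
    {i : ℕ} (hi : i < n) :
    k (blkIdx k p i) ≤ i ∧ i < k (blkIdx k p i + 1) := by
  set b := blkIdx k p i with hb
  have hbp : b ≤ p := blkIdx_le hmono hkn hi
  have hmon := kmono hmono
  constructor
  · rcases Nat.eq_zero_or_pos b with h0 | hpos
    · rw [h0, hk0]; omega
    · obtain ⟨c, hbc⟩ : ∃ c, b = c + 1 := ⟨b - 1, by omega⟩
      rw [hbc]
      by_contra hlt
      push_neg at hlt
      have hsub : ((Finset.range (p + 1)).filter fun j => k (j + 1) ≤ i) ⊆ Finset.range c := by
        intro j hj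
        simp only [Finset.mem_filter, Finset.mem_range] at hj ⊢
        by_contra hge
        push_neg at hge
        have : k (c+1) ≤ k (j+1) := hmon (c+1) (j+1) (by omega) (by omega)
        omega
      have := Finset.card_le_card hsub
      rw [Finset.card_range] at this
      simp only [blkIdx] at hb
      omega
  · by_contra hge
    push_neg at hge
    have hsub : Finset.range (b + 1) ⊆
        ((Finset.range (p + 1)).filter fun j => k (j + 1) ≤ i) := by
      intro j hj
      simp only [Finset.mem_range] at hj
      simp only [Finset.mem_filter, Finset.mem_range]
      exact ⟨by omega, le_trans (hmon (j+1) (b+1) (by omega) (by omega)) hge⟩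
    have := Finset.card_le_card hsub
    rw [Finset.card_range] at this
    simp only [blkIdx] at hb
    omega

lemma blkIdx_eq_iff (hmono : ∀ j, j ≤ p → k j < k (j + 1)) (hk0 : k 0 = 0) (hkn : k (p + 1) = n)
    {i : ℕ} (hi : i < n) {j : ℕ} (hj : j ≤ p) :
    blkIdx k p i = j ↔ k j ≤ i ∧ i < k (j + 1) := by
  have hspec := blkIdx_spec hmono hk0 hkn hi
  have hbp := blkIdx_le hmono hkn hi
  constructor
  · rintro rfl; exact hspec
  · rintro ⟨h1, h2⟩
    by_contra hne
    have hmon := kmono hmono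
    rcases Nat.lt_or_ge (blkIdx k p i) j with h | h
    · have : k (blkIdx k p i + 1) ≤ k j := hmon _ _ (by omega) (by omega)
      omega
    · have : k (j + 1) ≤ k (blkIdx k p i) := hmon _ _ (by omega) (by omega)
      omega

/-- the number of `i : Fin n` with `blkIdx k p i = j` is `k (j+1) - k j`. -/
lemma card_blk (hmono : ∀ j, j ≤ p → k j < k (j + 1)) (hk0 : k 0 = 0) (hkn : k (p + 1) = n)
    {j : ℕ} (hj : j ≤ p) :
    (Finset.univ.filter fun i : Fin n => blkIdx k p (i : ℕ) = j).card = k (j + 1) - k j := by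
  have hmon := kmono hmono
  have hkj1 : k (j + 1) ≤ n := hkn ▸ hmon (j+1) (p+1) (by omega) (le_refl _)
  rw [← Nat.card_Ico (k j) (k (j+1))]
  apply Finset.card_bij (fun (i : Fin n) _ => (i : ℕ))
  · intro i hi
    simp only [Finset.mem_filter, Finset.mem_univ, true_and] at hi
    rw [Finset.mem_Ico]
    exact (blkIdx_eq_iff hmono hk0 hkn i.isLt hj).mp hi
  · intro i hi i' hi' h
    exact Fin.ext h
  · intro m hm
    rw [Finset.mem_Ico] at hm
    refine ⟨⟨m, by omega⟩, ?_, rfl⟩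
    simp only [Finset.mem_filter, Finset.mem_univ, true_and]
    exact (blkIdx_eq_iff hmono hk0 hkn (by omega : m < n) hj).mpr hm

end Blk
section MoreAux
open Matrix
variable {N : ℕ}

lemma diag_sub_smul_one (d : Fin N → ℝ) (c : ℝ) :
    diagonal d - c • (1 : Matrix (Fin N) (Fin N) ℝ) = diagonal (fun i => d i - c) := by
  ext i j
  rcases eq_or_ne i j with rfl | h
  · simp [Matrix.diagonal_apply_eq, Matrix.one_apply_eq]
  · simp [Matrix.diagonal_apply_ne _ h, Matrix.one_apply_ne h]

lemma conj_sub_smul (U M : Matrix (Fin N) (Fin N) ℝ) (hUU : U * Uᵀ = 1) (c : ℝ) :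
    U * (M - c • 1) * Uᵀ = U * M * Uᵀ - c • 1 := by
  rw [mul_sub, sub_mul, Matrix.mul_smul, mul_one, Matrix.smul_mul, hUU]

lemma diagonal_submatrix_equiv (d : Fin N → ℝ) (σ : Equiv.Perm (Fin N)) :
    (diagonal d).submatrix σ σ = diagonal (fun i => d (σ i)) := by
  ext i j
  rcases eq_or_ne i j with rfl | h
  · simp
  · rw [Matrix.submatrix_apply, Matrix.diagonal_apply_ne _ (fun hc => h (σ.injective hc)),
      Matrix.diagonal_apply_ne _ h]

/-- adjust the determinant sign of an orthogonal conjugation of a diagonal matrix -/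
lemma fix_det (hN : 0 < N) (Q : Matrix (Fin N) (Fin N) ℝ) (d : Fin N → ℝ)
    (hQ : Qᵀ * Q = 1) :
    ∃ Q' : Matrix (Fin N) (Fin N) ℝ, Q'ᵀ * Q' = 1 ∧ Q'.det = 1 ∧
      Q' * diagonal d * Q'ᵀ = Q * diagonal d * Qᵀ := by
  have hdet2 : Q.det * Q.det = 1 := by
    have := congrArg Matrix.det hQ
    rwa [Matrix.det_mul, Matrix.det_transpose, Matrix.det_one] at this
  rcases mul_self_eq_one_iff.mp hdet2 with h1 | hm1
  · exact ⟨Q, hQ, h1, rfl⟩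
  · set i₀ : Fin N := ⟨0, hN⟩
    set s : Fin N → ℝ := fun i => if i = i₀ then -1 else 1 with hs
    set S : Matrix (Fin N) (Fin N) ℝ := diagonal s with hS
    have hSS : S * S = 1 := by
      rw [hS, Matrix.diagonal_mul_diagonal,
        show (fun i => s i * s i) = (fun _ => (1:ℝ)) from funext fun i => by
          by_cases h : i = i₀ <;> simp [hs, h], Matrix.diagonal_one]
    have hST : Sᵀ = S := by rw [hS, Matrix.diagonal_transpose]
    have hdetS : S.det = -1 := by
      rw [hS, Matrix.det_diagonal, hs]
      rw [Finset.prod_ite_eq' Finset.univ i₀ (fun _ => (-1 : ℝ))]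
      simp
    refine ⟨Q * S, ?_, ?_, ?_⟩
    · rw [Matrix.transpose_mul, hST]
      calc S * Qᵀ * (Q * S) = S * (Qᵀ * Q) * S := by noncomm_ring
        _ = S * S := by rw [hQ, mul_one]
        _ = 1 := hSS
    · rw [Matrix.det_mul, hdetS, hm1]; ring
    · have hcomm : S * diagonal d * S = diagonal d := by
        rw [hS, Matrix.diagonal_mul_diagonal, Matrix.diagonal_mul_diagonal,
          show (fun i => s i * d i * s i) = d from funext fun i => by
            by_cases h : i = i₀ <;> simp [hs, h] <;> ring]
      calc (Q * S) * diagonal d * (Q * S)ᵀ = Q * (S * diagonal d * S) * Qᵀ := by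
            rw [Matrix.transpose_mul, hST]; noncomm_ring
        _ = Q * diagonal d * Qᵀ := by rw [hcomm]

end MoreAux
theorem stmt1 (p n : ℕ) (hp : 1 ≤ p) (k : ℕ → ℕ) (hk0 : k 0 = 0) (hkn : k (p + 1) = n)
    (hmono : ∀ j, j ≤ p → k j < k (j + 1))
    (a : ℕ → ℝ) (ha : ∀ i j, i ≤ p → j ≤ p → i ≠ j → a i ≠ a j) :
    {X : Matrix (Fin n) (Fin n) ℝ | X.IsSymm ∧
        ((List.range (p + 1)).map fun j => X - a j • 1).prod = 0 ∧
        ∀ i : ℕ, 1 ≤ i → i ≤ p →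
          (X ^ i).trace = ∑ j ∈ Finset.range (p + 1), ((k (j + 1) - k j : ℕ) : ℝ) * a j ^ i} =
      {Y : Matrix (Fin n) (Fin n) ℝ | ∃ Q : Matrix (Fin n) (Fin n) ℝ,
        Qᵀ * Q = 1 ∧ Q.det = 1 ∧
        Y = Q * Matrix.diagonal (fun i : Fin n => a (blkIdx k p i)) * Qᵀ} := by
  have hn : 0 < n := by have := hmono p (le_refl p); omega
  have hble : ∀ i : Fin n, blkIdx k p (i : ℕ) ≤ p := fun i => blkIdx_le hmono hkn i.isLt
  set Λ : Matrix (Fin n) (Fin n) ℝ := Matrix.diagonal (fun i : Fin n => a (blkIdx k p i))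
    with hΛ
  ext X
  simp only [Set.mem_setOf_eq]
  constructor
  · rintro ⟨hsymm, hprod, htr⟩
    have hH : X.IsHermitian := by
      rw [Matrix.IsHermitian, Matrix.conjTranspose_eq_transpose_of_trivial]; exact hsymm
    set lam : Fin n → ℝ := fun i => hH.eigenvalues i with hlam
    set U : Matrix (Fin n) (Fin n) ℝ := (hH.eigenvectorUnitary : Matrix (Fin n) (Fin n) ℝ)
      with hUdef
    have hU : Uᵀ * U = 1 := by
      have := Matrix.mem_unitaryGroup_iff'.mp hH.eigenvectorUnitary.2
      rwa [Matrix.star_eq_conjTranspose, Matrix.conjTranspose_eq_transpose_of_trivial] at this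
    have hUU : U * Uᵀ = 1 := mul_eq_one_comm.mpr hU
    have hXd : X = U * Matrix.diagonal lam * Uᵀ := by
      have h := hH.spectral_theorem
      rw [Unitary.conjStarAlgAut_apply, Matrix.star_eq_conjTranspose,
        Matrix.conjTranspose_eq_transpose_of_trivial] at h
      exact h
    -- every eigenvalue is one of the `a j`
    have hmem : ∀ i : Fin n, ∃ j, j ≤ p ∧ lam i = a j := by
      have hmap : (fun j => X - a j • 1) =
          fun j => U * Matrix.diagonal (fun t : Fin n => lam t - a j) * Uᵀ := by
        funext j
        rw [hXd, ← conj_sub_smul _ _ hUU, diag_sub_smul_one]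
      rw [hmap, conj_list_prod U Uᵀ hU, diagonal_list_prod] at hprod
      set D : Matrix (Fin n) (Fin n) ℝ :=
        Matrix.diagonal (fun t : Fin n => ((List.range (p+1)).map fun j => lam t - a j).prod)
        with hDdef
      have hD : D = 0 := by
        have h1 : Uᵀ * (U * D * Uᵀ) * U = D := by
          calc Uᵀ * (U * D * Uᵀ) * U = (Uᵀ * U) * D * (Uᵀ * U) := by noncomm_ring
            _ = D := by rw [hU, one_mul, mul_one]
        rw [hprod] at h1
        rw [← h1, mul_zero, zero_mul]
      intro i
      have hent : ((List.range (p+1)).map fun j => lam i - a j).prod = 0 := by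
        have := congrFun (congrFun hD i) i
        rwa [hDdef, Matrix.diagonal_apply_eq, Matrix.zero_apply] at this
      obtain ⟨j, hjmem, hj0⟩ := List.mem_map.mp (List.prod_eq_zero_iff.mp hent)
      exact ⟨j, Nat.lt_succ_iff.mp (List.mem_range.mp hjmem), (sub_eq_zero.mp hj0)⟩
    choose c hcp hceq using hmem
    set m : ℕ → ℕ := fun j => (Finset.univ.filter fun i : Fin n => c i = j).card with hm
    have hmaps : ∀ i : Fin n, i ∈ Finset.univ → c i ∈ Finset.range (p+1) :=
      fun i _ => Finset.mem_range.mpr (Nat.lt_succ_of_le (hcp i))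
    -- trace of powers
    have htrace : ∀ t : ℕ, (X ^ t).trace = ∑ j ∈ Finset.range (p+1), (m j : ℝ) * a j ^ t := by
      intro t
      rw [hXd, myConjPow U _ hU, Matrix.trace_mul_comm, ← mul_assoc, hU, one_mul,
        Matrix.diagonal_pow, Matrix.trace_diagonal]
      simp only [Pi.pow_apply]
      have e1 : ∑ i : Fin n, lam i ^ t = ∑ i : Fin n, a (c i) ^ t :=
        Finset.sum_congr rfl fun i _ => by rw [hceq i]
      rw [e1, ← Finset.sum_fiberwise_of_maps_to hmaps (fun i => a (c i) ^ t)]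
      apply Finset.sum_congr rfl
      intro j hj
      have e2 : ∀ i ∈ Finset.univ.filter (fun i : Fin n => c i = j),
          a (c i) ^ t = a j ^ t := fun i hi => by rw [(Finset.mem_filter.mp hi).2]
      rw [Finset.sum_congr rfl e2, Finset.sum_const, nsmul_eq_mul]
    have hsum_m : ∑ j ∈ Finset.range (p+1), m j = n := by
      have := Finset.card_eq_sum_card_fiberwise hmaps
      rw [Finset.card_univ, Fintype.card_fin] at this
      exact this.symm
    have hsum_n : ∑ j ∈ Finset.range (p+1), ((k (j+1) - k j : ℕ) : ℝ) = (n:ℝ) := by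
      have e1 : ∀ j ∈ Finset.range (p+1),
          ((k (j+1) - k j : ℕ) : ℝ) = (k (j+1) : ℝ) - (k j : ℝ) := by
        intro j hj
        rw [Finset.mem_range] at hj
        exact_mod_cast Nat.cast_sub (kmono hmono j (j+1) (by omega) (by omega))
      rw [Finset.sum_congr rfl e1, Finset.sum_range_sub (fun j => ((k j : ℕ) : ℝ)), hkn, hk0]
      simp
    have hveq : ∀ t : ℕ, t ≤ p →
        ∑ j ∈ Finset.range (p+1), ((m j : ℝ) - ((k (j+1) - k j : ℕ):ℝ)) * a j ^ t = 0 := by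
      intro t ht
      simp only [sub_mul]
      rw [Finset.sum_sub_distrib]
      rcases Nat.eq_zero_or_pos t with rfl | htpos
      · simp only [pow_zero, mul_one]
        rw [hsum_n, sub_eq_zero, ← Nat.cast_sum, hsum_m]
      · rw [sub_eq_zero, ← htrace t, htr t htpos ht]
    have hmj : ∀ j, j ≤ p → (m j : ℝ) = ((k (j+1) - k j : ℕ) : ℝ) := by
      have hinj : Function.Injective (fun j : Fin (p+1) => a (j:ℕ)) := by
        intro x y hxy
        by_contra hne
        exact ha x y (Nat.lt_succ_iff.mp x.isLt) (Nat.lt_succ_iff.mp y.isLt)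
          (fun h => hne (Fin.ext h)) hxy
      have hz : (fun j : Fin (p+1) => (m (j:ℕ) : ℝ) - ((k ((j:ℕ)+1) - k (j:ℕ) : ℕ):ℝ)) = 0 := by
        apply eq_zero_of_forall_pow_sum_mul_pow_eq_zero hinj
        intro t
        have h := hveq (t:ℕ) (Nat.lt_succ_iff.mp t.isLt)
        rw [← Fin.sum_univ_eq_sum_range
          (fun j => ((m j : ℝ) - ((k (j+1) - k j : ℕ):ℝ)) * a j ^ (t:ℕ)) (p+1)] at h
        exact h
      intro j hj
      have := congrFun hz ⟨j, by omega⟩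
      simpa [sub_eq_zero] using this
    have hmj' : ∀ j : Fin (p+1), m (j:ℕ) = k ((j:ℕ)+1) - k (j:ℕ) :=
      fun j => Nat.cast_injective (hmj (j:ℕ) (Nat.lt_succ_iff.mp j.isLt))
    -- build the permutation matching the two block structures
    set cF : Fin n → Fin (p+1) := fun i => ⟨c i, Nat.lt_succ_of_le (hcp i)⟩ with hcF
    set bF : Fin n → Fin (p+1) := fun i => ⟨blkIdx k p (i:ℕ), Nat.lt_succ_of_le (hble i)⟩ with hbF
    have hcard : ∀ j : Fin (p+1), Fintype.card {i // bF i = j} = Fintype.card {i // cF i = j} := by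
      intro j
      rw [Fintype.card_subtype, Fintype.card_subtype]
      have h1 : (Finset.univ.filter fun i : Fin n => bF i = j) =
          Finset.univ.filter fun i : Fin n => blkIdx k p (i:ℕ) = (j:ℕ) :=
        Finset.filter_congr fun i _ => by simp [hbF, Fin.ext_iff]
      have h2 : (Finset.univ.filter fun i : Fin n => cF i = j) =
          Finset.univ.filter fun i : Fin n => c i = (j:ℕ) :=
        Finset.filter_congr fun i _ => by simp [hcF, Fin.ext_iff]
      rw [h1, h2, card_blk hmono hk0 hkn (Nat.lt_succ_iff.mp j.isLt)]
      rw [show (Finset.univ.filter fun i : Fin n => c i = (j:ℕ)).card = m (j:ℕ) from rfl]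
      exact (hmj' j).symm
    set e : ∀ j : Fin (p+1), {i // bF i = j} ≃ {i // cF i = j} :=
      fun j => Fintype.equivOfCardEq (hcard j) with he
    set σ : Equiv.Perm (Fin n) :=
      (Equiv.sigmaFiberEquiv bF).symm.trans
        ((Equiv.sigmaCongrRight e).trans (Equiv.sigmaFiberEquiv cF)) with hσdef
    have hσ : ∀ i, cF (σ i) = bF i := fun i => ((e (bF i)) ⟨i, rfl⟩).2
    have hlamσ : (fun i : Fin n => lam (σ i)) = fun i : Fin n => a (blkIdx k p (i:ℕ)) := by
      funext i
      rw [hceq (σ i), show c (σ i) = blkIdx k p (i:ℕ) from congrArg Fin.val (hσ i)]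
    set Q := U.submatrix id σ with hQdef
    have hQT : Qᵀ = Uᵀ.submatrix σ id := by rw [hQdef, Matrix.transpose_submatrix]
    have hid : (id : Fin n → Fin n) = ⇑(Equiv.refl (Fin n)) := rfl
    have hQ1 : Qᵀ * Q = 1 := by
      rw [hQT, hQdef, hid, Matrix.submatrix_mul_equiv Uᵀ U _ (Equiv.refl (Fin n)) _, hU,
        Matrix.submatrix_one_equiv σ]
    have hX2 : X = Q * Λ * Qᵀ := by
      rw [hΛ, ← hlamσ, ← diagonal_submatrix_equiv lam σ, hQdef, hQT, hid,
        Matrix.submatrix_mul_equiv U (Matrix.diagonal lam) _ σ _,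
        Matrix.submatrix_mul_equiv (U * Matrix.diagonal lam) Uᵀ _ σ _, ← hid,
        Matrix.submatrix_id_id]
      exact hXd
    obtain ⟨Q', hQ'1, hQ'det, hQ'conj⟩ :=
      fix_det hn Q (fun i : Fin n => a (blkIdx k p (i:ℕ))) hQ1
    exact ⟨Q', hQ'1, hQ'det, by rw [hX2, hΛ, ← hQ'conj]⟩
  · rintro ⟨Q, hQ, hdet, rfl⟩
    have hQQ : Q * Qᵀ = 1 := mul_eq_one_comm.mpr hQ
    refine ⟨?_, ?_, ?_⟩
    · show (Q * Λ * Qᵀ)ᵀ = _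
      rw [Matrix.transpose_mul, Matrix.transpose_mul, Matrix.transpose_transpose, hΛ,
        Matrix.diagonal_transpose, mul_assoc]
    · have hmap : (fun j => Q * Λ * Qᵀ - a j • 1) =
          fun j => Q * Matrix.diagonal (fun i : Fin n => a (blkIdx k p (i:ℕ)) - a j) * Qᵀ := by
        funext j
        rw [← diag_sub_smul_one, conj_sub_smul _ _ hQQ]
      rw [hmap, conj_list_prod Q Qᵀ hQ, diagonal_list_prod]
      have hzero : (fun i : Fin n =>
          ((List.range (p+1)).map fun j => a (blkIdx k p (i:ℕ)) - a j).prod) = fun _ => (0:ℝ) := by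
        funext i
        apply List.prod_eq_zero
        refine List.mem_map.mpr ⟨blkIdx k p (i:ℕ), List.mem_range.mpr ?_, by ring⟩
        exact Nat.lt_succ_of_le (hble i)
      rw [hzero, Matrix.diagonal_zero, mul_zero, zero_mul]
    · intro i hi1 hip
      rw [myConjPow Q Λ hQ i, Matrix.trace_mul_comm, ← mul_assoc, hQ, one_mul, hΛ,
        Matrix.diagonal_pow, Matrix.trace_diagonal]
      simp only [Pi.pow_apply]
      have hmaps : ∀ t : Fin n, t ∈ Finset.univ → blkIdx k p (t:ℕ) ∈ Finset.range (p+1) :=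
        fun t _ => Finset.mem_range.mpr (Nat.lt_succ_of_le (hble t))
      rw [← Finset.sum_fiberwise_of_maps_to hmaps (fun t => a (blkIdx k p (t:ℕ)) ^ i)]
      apply Finset.sum_congr rfl
      intro j hj
      rw [Finset.mem_range] at hj
      have : ∀ t : Fin n, t ∈ Finset.univ.filter (fun t : Fin n => blkIdx k p (t:ℕ) = j) →
          a (blkIdx k p (t:ℕ)) ^ i = a j ^ i := by
        intro t ht
        rw [(Finset.mem_filter.mp ht).2]
      rw [Finset.sum_congr rfl this, Finset.sum_const, card_blk hmono hk0 hkn (by omega),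
        nsmul_eq_mul]
end

section
/- Let k ≤ n be positive integers, let A be a real k×k positive definite matrix, and let R be an invertible upper triangular real k×k matrix with RᵀR = A. Let R̂ ∈ ℝ^{n×k} denote the n×k matrix whose top k×k block is R and whose remaining (n−k)×k block is zero. Then { Y ∈ ℝ^{n×k} : YᵀY = A } = { Q R̂ : Q ∈ O_n(ℝ) }. -/
open Matrix RealInnerProductSpace

theorem stmt14 (n k : ℕ) (hk : 0 < k) (hkn : k ≤ n)
    (A R : Matrix (Fin k) (Fin k) ℝ) (hA : A.PosDef)
    (hRinv : IsUnit R) (hRtri : R.BlockTriangular id) (hRA : Rᵀ * R = A) :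
    {Y : Matrix (Fin n) (Fin k) ℝ | Yᵀ * Y = A} =
      {Y : Matrix (Fin n) (Fin k) ℝ | ∃ Q : Matrix (Fin n) (Fin n) ℝ, Qᵀ * Q = 1 ∧
        Y = Q * Matrix.of (fun (i : Fin n) (j : Fin k) =>
          if h : (i : ℕ) < k then R ⟨(i : ℕ), h⟩ j else 0)} := by
  -- sum lemma
  have hsum : ∀ (g : Fin n → ℝ), (∀ i : Fin n, ¬ (i : ℕ) < k → g i = 0) →
      ∑ i : Fin n, g i = ∑ j : Fin k, g (Fin.castLE hkn j) := by
    intro g hg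
    rw [← Finset.sum_subset (Finset.subset_univ
      ((Finset.univ : Finset (Fin k)).map ⟨Fin.castLE hkn, Fin.castLE_injective hkn⟩))]
    · rw [Finset.sum_map]; rfl
    · intro i _ hi
      apply hg
      intro hik
      apply hi
      simp only [Finset.mem_map, Finset.mem_univ, Function.Embedding.coeFn_mk, true_and]
      exact ⟨⟨i, hik⟩, rfl⟩
  set Rh : Matrix (Fin n) (Fin k) ℝ := Matrix.of (fun (i : Fin n) (j : Fin k) =>
    if h : (i : ℕ) < k then R ⟨(i : ℕ), h⟩ j else 0) with hRh
  have hRhR : Rhᵀ * Rh = A := by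
    rw [← hRA]
    ext j j'
    simp only [mul_apply, transpose_apply]
    rw [hsum]
    · apply Finset.sum_congr rfl
      intro x _
      simp [hRh]
    · intro i hi
      simp [hRh, hi]
  ext Y
  simp only [Set.mem_setOf_eq]
  constructor
  · intro hY
    have hdet : IsUnit R.det := (Matrix.isUnit_iff_isUnit_det R).mp hRinv
    have hRR : R * R⁻¹ = 1 := Matrix.mul_nonsing_inv R hdet
    have hRR' : R⁻¹ * R = 1 := Matrix.nonsing_inv_mul R hdet
    set X := Y * R⁻¹ with hX
    have hXX : Xᵀ * X = 1 := by
      have : Xᵀ * X = R⁻¹ᵀ * (Yᵀ * Y) * R⁻¹ := by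
        rw [hX, Matrix.transpose_mul]
        simp only [Matrix.mul_assoc]
      rw [this, hY, ← hRA, Matrix.transpose_nonsing_inv]
      calc Rᵀ⁻¹ * (Rᵀ * R) * R⁻¹ = (Rᵀ⁻¹ * Rᵀ) * (R * R⁻¹) := by
            simp only [Matrix.mul_assoc]
        _ = 1 := by
          rw [hRR, Matrix.nonsing_inv_mul _ (by rwa [Matrix.det_transpose]),
            Matrix.one_mul]
    -- columns of X as vectors in EuclideanSpace
    set v : Fin n → EuclideanSpace ℝ (Fin n) := fun i =>
      if h : (i : ℕ) < k then WithLp.toLp 2 (fun a => X a ⟨(i : ℕ), h⟩) else 0 with hv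
    set s : Set (Fin n) := {i | (i : ℕ) < k} with hs
    have hortho : Orthonormal ℝ (s.restrict v) := by
      rw [orthonormal_iff_ite]
      intro i j
      have hi : ((i : Fin n) : ℕ) < k := i.2
      have hj : ((j : Fin n) : ℕ) < k := j.2
      have h1 : Set.restrict s v i = WithLp.toLp 2 (fun a => X a ⟨(i : Fin n), hi⟩) := by
        simp [hv, Set.restrict, dif_pos hi]
      have h2 : Set.restrict s v j = WithLp.toLp 2 (fun a => X a ⟨(j : Fin n), hj⟩) := by
        simp [hv, Set.restrict, dif_pos hj]
      have : (inner ℝ (Set.restrict s v i) (Set.restrict s v j) : ℝ) =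
          (Xᵀ * X) ⟨(i : Fin n), hi⟩ ⟨(j : Fin n), hj⟩ := by
        rw [h1, h2]
        simp [PiLp.inner_apply, mul_apply, RCLike.inner_apply, mul_comm]
      rw [this, hXX, Matrix.one_apply]
      simp [Fin.ext_iff, Subtype.ext_iff]
    obtain ⟨b, hb⟩ := hortho.exists_orthonormalBasis_extension_of_card_eq
      (by simp [finrank_euclideanSpace])
    refine ⟨Matrix.of (fun a i => b i a), ?_, ?_⟩
    · ext i j
      have : (∑ a, b i a * b j a) = (inner ℝ (b i) (b j) : ℝ) := by
        simp [PiLp.inner_apply, RCLike.inner_apply, mul_comm]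
      simp only [mul_apply, transpose_apply, Matrix.of_apply]
      rw [this, orthonormal_iff_ite.mp b.orthonormal i j, Matrix.one_apply]
    · have hXR : X * R = Y := by rw [hX, Matrix.mul_assoc, hRR', Matrix.mul_one]
      rw [← hXR]
      ext a j
      simp only [mul_apply, Matrix.of_apply]
      rw [hsum]
      · apply Finset.sum_congr rfl
        intro x _
        have hx : ((Fin.castLE hkn x : Fin n) : ℕ) < k := by simp [x.2]
        have hbv : b (Fin.castLE hkn x) = v (Fin.castLE hkn x) := hb _ hx
        rw [hbv]
        simp only [hv, dif_pos hx]
        simp [hRh, x.isLt]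
      · intro i hi
        simp [hRh, hi]
  · rintro ⟨Q, hQ, rfl⟩
    rw [Matrix.transpose_mul, ← Matrix.mul_assoc, Matrix.mul_assoc Rhᵀ, hQ, Matrix.mul_one, hRhR]
end
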